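/- arXiv:0808.1787 — 2 statements merged into one kernel-verified Lean document; each statement's English description precedes it below -/
import Mathlib

section
/- There exists a constant c > 0 such that for every integer d ≥ 1, the Boolean hypercube [2]^d has a 2-TC-spanner with at most c·d³·max_{0≤i<j≤d} min_{i≤k≤j} [C(d,k)/C(j−i,k−i)]·max{C(k,i), C(d−k,d−j)} edges, where C(a,b) denotes the binomial coefficient. -/
/-- There is a directed walk of length at most `k` from `u` to `v` in the digraph
with edge relation `E`. -/
def distLE {V : Type*} (E : V → V → Prop) : ℕ → V → V → Prop
  | 0 => fun u v => u = v
  | n + 1 => fun u v => u = v ∨ ∃ w, E u w ∧ distLE E n w v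

/-- `H` is a `k`-transitive-closure-spanner of the digraph `E`: every edge of `H` is an
edge of the transitive closure of `E`, and whenever `E` has a directed path from `u` to `v`,
`H` has one of length at most `k`. -/
def IsTCSpanner {V : Type*} (E H : V → V → Prop) (k : ℕ) : Prop :=
  (∀ u v, H u v → u ≠ v ∧ Relation.TransGen E u v) ∧
  (∀ u v, Relation.ReflTransGen E u v → distLE H k u v)

/-- The Boolean hypercube digraph `[2]^d`: an edge from `x` to `y` iff `y` is obtained from
`x` by flipping a single coordinate from `false` to `true`. -/
def cubeEdge (d : ℕ) (x y : Fin d → Bool) : Prop :=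
  ∃ t, x t = false ∧ y = Function.update x t true

/-!
For levels `i < j` of the cube fix a middle level `k`. A pair `x ≤ y` with `|x| = i`, `|y| = j`
has exactly `C(j-i, k-i)` vertices of level `k` between them, a fraction
`p = C(j-i,k-i)/C(d,k)` of the level. By averaging, some vertex of level `k` lies in at least a
`p`-fraction of the intervals `[x, y]` not yet hit; since there are at most `4^d` pairs, about
`2d/p` such hubs chosen greedily meet every interval. Joining every hub to all vertices of level
`i` below it and of level `j` above it costs at most `C(k,i) + C(d-k,d-j)` edges per hub and
connects each such pair by a path of length two. Summing over the `O(d²)` pairs of levels gives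
the bound.
-/

open Finset

lemma cubeEdge_eq_covBy (d : ℕ) : cubeEdge d = (· ⋖ ·) := by
  ext x y
  simp only [cubeEdge, Pi.covBy_iff_exists_right_eq, Bool.covBy_iff, Bool.lt_iff]
  constructor
  · rintro ⟨t, ht, rfl⟩; exact ⟨t, true, ⟨ht, rfl⟩, rfl⟩
  · rintro ⟨t, _, ⟨ht, rfl⟩, rfl⟩; exact ⟨t, ht, rfl⟩

theorem isTCSpanner_covBy_two {V : Type*} [PartialOrder V] [LocallyFiniteOrder V]
    {H : V → V → Prop} (hH : ∀ u v, H u v → u < v)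
    (hhop : ∀ u v, u < v → ∃ w, (u = w ∨ H u w) ∧ (w = v ∨ H w v)) :
    IsTCSpanner (· ⋖ ·) H 2 := by
  refine ⟨fun u v huv => ⟨(hH u v huv).ne, lt_iff_transGen_covBy.1 (hH u v huv)⟩,
    fun u v huv => ?_⟩
  obtain rfl | hlt := (le_iff_reflTransGen_covBy.2 huv).eq_or_lt
  · exact Or.inl rfl
  obtain ⟨w, rfl | huw, rfl | hwv⟩ := hhop u v hlt
  · exact absurd rfl hlt.ne
  · exact Or.inr ⟨v, hwv, Or.inl rfl⟩
  · exact Or.inr ⟨_, huw, Or.inl rfl⟩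
  · exact Or.inr ⟨w, huw, Or.inr ⟨v, hwv, rfl⟩⟩

def funBoolOrderIsoFinset (α : Type*) [Fintype α] [DecidableEq α] : (α → Bool) ≃o Finset α where
  toFun x := {a | x a}
  invFun s a := a ∈ s
  left_inv x := by ext; simp
  right_inv s := by ext; simp
  map_rel_iff' {x y} := by
    simp [Finset.subset_iff, Pi.le_def, Bool.le_iff_imp]

theorem exists_hitting_subset {α β : Type*} [DecidableEq β] (R : α → β → Prop)
    [∀ t z, Decidable (R t z)] {L : Finset β} (hL : L.Nonempty) {p : ℝ} (T : Finset α)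
    (hR : ∀ t ∈ T, p * #L ≤ #{z ∈ L | R t z}) (m : ℕ) (hT : #T * (1 - p) ^ m < 1) :
    ∃ Z ⊆ L, #Z ≤ m ∧ ∀ t ∈ T, ∃ z ∈ Z, R t z := by
  induction m generalizing T with
  | zero =>
    have : T = ∅ := by simpa using hT
    exact ⟨∅, empty_subset _, le_rfl, by simp [this]⟩
  | succ m ih =>
    obtain rfl | ⟨t₀, ht₀⟩ := T.eq_empty_or_nonempty
    · exact ⟨∅, empty_subset _, Nat.zero_le _, by simp⟩
    have hp : p ≤ 1 := by
      have hLpos : (0 : ℝ) < #L := by exact_mod_cast hL.card_pos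
      have : (#{z ∈ L | R t₀ z} : ℝ) ≤ #L := by exact_mod_cast card_filter_le _ _
      nlinarith [hR t₀ ht₀]
    obtain ⟨z, hzL, hz⟩ : ∃ z ∈ L, p * #T ≤ #{t ∈ T | R t z} := by
      apply exists_le_of_sum_le hL
      calc ∑ _z ∈ L, p * #T = ∑ _t ∈ T, p * #L := by simp only [sum_const, nsmul_eq_mul]; ring
        _ ≤ ∑ t ∈ T, (#{z ∈ L | R t z} : ℝ) := sum_le_sum hR
        _ = ∑ z ∈ L, (#{t ∈ T | R t z} : ℝ) := by
          exact_mod_cast sum_card_bipartiteAbove_eq_sum_card_bipartiteBelow R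
    have hrest : (#{t ∈ T | ¬R t z} : ℝ) ≤ #T * (1 - p) := by
      have := card_filter_add_card_filter_not (s := T) (R · z)
      have : (#{t ∈ T | R t z} : ℝ) + #{t ∈ T | ¬R t z} = #T := by exact_mod_cast this
      linarith
    obtain ⟨Z, hZL, hZm, hZ⟩ := ih {t ∈ T | ¬R t z}
      (fun t ht => hR t (mem_filter.1 ht).1)
      (calc _ ≤ #T * (1 - p) * (1 - p) ^ m := by gcongr
        _ < 1 := by rwa [mul_assoc, ← pow_succ'])
    refine ⟨insert z Z, insert_subset hzL hZL, (card_insert_le _ _).trans (by omega),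
      fun t ht => ?_⟩
    by_cases h : R t z
    · exact ⟨z, mem_insert_self _ _, h⟩
    · obtain ⟨w, hw, hRw⟩ := hZ t (mem_filter.2 ⟨ht, h⟩)
      exact ⟨w, mem_insert_of_mem hw, hRw⟩

lemma natCast_mul_one_sub_pow_lt_one {N m n : ℕ} {p : ℝ} (hN : N ≤ 4 ^ n) (hp : p ≤ 1)
    (hpm : 2 * n < p * m) : (N : ℝ) * (1 - p) ^ m < 1 := by
  have h4 : (4 : ℝ) ^ n ≤ Real.exp (2 * n) := by
    rw [mul_comm, Real.exp_nat_mul]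
    gcongr
    calc (4 : ℝ) = 2 * 2 := by norm_num
      _ ≤ Real.exp 1 * Real.exp 1 := by gcongr <;> linarith [Real.add_one_le_exp 1]
      _ = Real.exp 2 := by rw [← Real.exp_add]; norm_num
  have hN' : (N : ℝ) ≤ Real.exp (2 * n) := le_trans (by exact_mod_cast hN) h4
  calc (N : ℝ) * (1 - p) ^ m ≤ Real.exp (2 * n) * Real.exp (-p) ^ m := by
        gcongr
        exact Real.one_sub_le_exp_neg p
    _ = Real.exp (2 * n - p * m) := by
        rw [← Real.exp_nat_mul, ← Real.exp_add]; ring_nf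
    _ < 1 := Real.exp_lt_one_iff.2 (by linarith)

lemma exists_nat_two_mul_lt_mul_le {p x : ℝ} (hp0 : 0 < p) (hp1 : p ≤ 1) (hx : 1 ≤ x) :
    ∃ m : ℕ, 2 * x < p * m ∧ (m : ℝ) ≤ 3 * x / p := by
  refine ⟨⌊2 * x / p⌋₊ + 1, ?_, ?_⟩
  · have := Nat.lt_floor_add_one (2 * x / p)
    rw [div_lt_iff₀ hp0] at this
    push_cast
    linarith
  · have hfloor := Nat.floor_le (show 0 ≤ 2 * x / p by positivity)
    have hxp : 1 ≤ x / p := (one_le_div hp0).2 (hp1.trans hx)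
    calc (↑(⌊2 * x / p⌋₊ + 1) : ℝ) ≤ 2 * x / p + x / p := by push_cast; gcongr
      _ = 3 * x / p := by ring

theorem Nat.choose_sub_sub_le_choose {n i j k : ℕ} (hik : i ≤ k) (hkj : k ≤ j) (hjn : j ≤ n) :
    (j - i).choose (k - i) ≤ n.choose k := by
  have hmul : (n - i).choose (k - i) * n.choose i ≤ n.choose k * n.choose i := by
    rw [mul_comm, ← Nat.choose_mul hik]
    exact Nat.mul_le_mul_left _ (Nat.choose_le_choose i (hkj.trans hjn))
  exact (Nat.choose_le_choose _ (by omega)).trans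
    (Nat.le_of_mul_le_mul_right hmul (Nat.choose_pos (by omega)))

noncomputable def levelCost (n i j k : ℕ) : ℝ :=
  ((n.choose k : ℝ) / ((j - i).choose (k - i) : ℝ)) *
    max ((k.choose i : ℝ)) (((n - k).choose (n - j) : ℝ))

noncomputable def spannerCost (n : ℕ) : ℝ :=
  sSup {x : ℝ | ∃ i j : ℕ, i < j ∧ j ≤ n ∧ x = sInf (levelCost n i j '' Set.Icc i j)}

lemma levelCost_nonneg (n i j k : ℕ) : 0 ≤ levelCost n i j k := by
  unfold levelCost; positivity

lemma sInf_levelCost_le_spannerCost {n i j : ℕ} (hij : i < j) (hjn : j ≤ n) :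
    sInf (levelCost n i j '' Set.Icc i j) ≤ spannerCost n := by
  refine le_csSup (Set.Finite.bddAbove ?_) ⟨i, j, hij, hjn, rfl⟩
  refine (((Set.finite_Iic n).prod (Set.finite_Iic n)).image
    fun q => sInf (levelCost n q.1 q.2 '' Set.Icc q.1 q.2)).subset ?_
  rintro _ ⟨i, j, hij, hjn, rfl⟩
  exact ⟨(i, j), ⟨Set.mem_Iic.2 (by omega), Set.mem_Iic.2 hjn⟩, rfl⟩

lemma spannerCost_nonneg {n : ℕ} (hn : 1 ≤ n) : 0 ≤ spannerCost n :=
  (Real.sInf_nonneg (by rintro _ ⟨k, -, rfl⟩; exact levelCost_nonneg ..)).trans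
    (sInf_levelCost_le_spannerCost one_pos hn)

section LevelSpanner

variable {α : Type*} [Fintype α] [DecidableEq α] {i j k : ℕ}

lemma card_filter_powersetCard_between {x y : Finset α} (hxy : x ⊆ y) (hxk : #x ≤ k) :
    #{z ∈ powersetCard k univ | x ⊆ z ∧ z ⊆ y} = (#y - #x).choose (k - #x) := by
  rw [← card_filter_powersetCard_subset x y k hxy hxk]
  congr 1
  ext z
  simp only [mem_filter, mem_powersetCard, subset_univ, true_and]
  tauto

lemma exists_hubs (hn : 1 ≤ Fintype.card α) (hik : i ≤ k) (hkj : k ≤ j)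
    (hjn : j ≤ Fintype.card α) :
    ∃ Z ⊆ powersetCard k univ,
      (#Z : ℝ) ≤ 3 * Fintype.card α * ((Fintype.card α).choose k / (j - i).choose (k - i)) ∧
      ∀ x y : Finset α, x ⊆ y → #x = i → #y = j → ∃ z ∈ Z, x ⊆ z ∧ z ⊆ y := by
  set n := Fintype.card α
  have hCn : (0 : ℝ) < n.choose k := by exact_mod_cast Nat.choose_pos (by omega)
  have hCji : (0 : ℝ) < (j - i).choose (k - i) := by exact_mod_cast Nat.choose_pos (by omega)
  set p : ℝ := (j - i).choose (k - i) / n.choose k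
  have hp0 : 0 < p := div_pos hCji hCn
  have hp1 : p ≤ 1 :=
    div_le_one_of_le₀ (by exact_mod_cast Nat.choose_sub_sub_le_choose hik hkj hjn) hCn.le
  obtain ⟨m, hpm, hm⟩ := exists_nat_two_mul_lt_mul_le hp0 hp1 (x := n) (by exact_mod_cast hn)
  rw [div_div_eq_mul_div, mul_div_assoc] at hm
  set T : Finset (Finset α × Finset α) := {q | q.1 ⊆ q.2 ∧ #q.1 = i ∧ #q.2 = j}
  have hT : #T ≤ 4 ^ n := (card_le_univ T).trans (by simp [n, Fintype.card_finset, ← mul_pow])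
  have hR : ∀ q ∈ T, p * #(powersetCard k (univ : Finset α))
      ≤ #{z ∈ powersetCard k univ | q.1 ⊆ z ∧ z ⊆ q.2} := by
    intro q hq
    obtain ⟨hq12, hq1, hq2⟩ := (mem_filter.1 hq).2
    rw [card_filter_powersetCard_between hq12 (by omega), hq1, hq2, card_powersetCard, card_univ]
    exact (div_mul_cancel₀ _ hCn.ne').le
  obtain ⟨Z, hZL, hZm, hZ⟩ := exists_hitting_subset
    (fun (q : Finset α × Finset α) (z : Finset α) => q.1 ⊆ z ∧ z ⊆ q.2)
    (powersetCard_nonempty.2 (by simpa using hkj.trans hjn)) T hR m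
    (natCast_mul_one_sub_pow_lt_one hT hp1 hpm)
  exact ⟨Z, hZL, (Nat.cast_le.2 hZm).trans hm,
    fun x y hxy hx hy => hZ (x, y) (mem_filter.2 ⟨mem_univ _, hxy, hx, hy⟩)⟩

def hubEdges (i j : ℕ) (Z : Finset (Finset α)) : Finset (Finset α × Finset α) :=
  {e : Finset α × Finset α | e.1 ⊂ e.2 ∧ (#e.1 = i ∧ e.2 ∈ Z ∨ e.1 ∈ Z ∧ #e.2 = j)}

lemma card_hubEdges_le {Z : Finset (Finset α)} (hZ : Z ⊆ powersetCard k univ) (hkj : k ≤ j)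
    (hjn : j ≤ Fintype.card α) :
    #(hubEdges i j Z) ≤ #Z * (k.choose i + (Fintype.card α - k).choose (Fintype.card α - j)) := by
  let star : Finset α → Finset (Finset α × Finset α) := fun z =>
    (z.powersetCard i).image (·, z) ∪ {y ∈ powersetCard j (univ : Finset α) | z ⊆ y}.image (z, ·)
  have hsub : hubEdges i j Z ⊆ Z.biUnion star := by
    intro e he
    obtain ⟨hlt, ⟨hi, hz⟩ | ⟨hz, hj⟩⟩ := (mem_filter.1 he).2
    · exact mem_biUnion.2 ⟨e.2, hz, mem_union_left _ (mem_image.2 ⟨e.1,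
        mem_powersetCard.2 ⟨hlt.subset, hi⟩, rfl⟩)⟩
    · exact mem_biUnion.2 ⟨e.1, hz, mem_union_right _ (mem_image.2 ⟨e.2,
        mem_filter.2 ⟨mem_powersetCard.2 ⟨subset_univ _, hj⟩, hlt.subset⟩, rfl⟩)⟩
  refine (card_le_card hsub).trans (card_biUnion_le_card_mul _ _ _ fun z hz => ?_)
  have hzk : #z = k := (mem_powersetCard.1 (hZ hz)).2
  have habove : #{y ∈ powersetCard j univ | z ⊆ y} =
      (Fintype.card α - k).choose (Fintype.card α - j) := by
    rw [card_filter_powersetCard_subset z univ j (subset_univ _) (hzk ▸ hkj), card_univ, hzk]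
    exact Nat.choose_symm_of_eq_add (by omega)
  calc #(star z) ≤ #(z.powersetCard i) + #{y ∈ powersetCard j univ | z ⊆ y} :=
        (card_union_le _ _).trans (add_le_add card_image_le card_image_le)
    _ = _ := by rw [card_powersetCard, hzk, habove]

lemma hop_hubEdges {Z : Finset (Finset α)} {x y z : Finset α} (hz : z ∈ Z) (hxz : x ⊆ z)
    (hzy : z ⊆ y) (hx : #x = i) (hy : #y = j) :
    (x = z ∨ (x, z) ∈ hubEdges i j Z) ∧ (z = y ∨ (z, y) ∈ hubEdges i j Z) := by
  simp only [hubEdges, mem_filter, mem_univ, true_and, ssubset_iff_subset_ne]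
  constructor
  · by_cases h : x = z
    · exact Or.inl h
    · exact Or.inr ⟨⟨hxz, h⟩, Or.inl ⟨hx, hz⟩⟩
  · by_cases h : z = y
    · exact Or.inl h
    · exact Or.inr ⟨⟨hzy, h⟩, Or.inr ⟨hz, hy⟩⟩

lemma exists_levelPair_spanner (hn : 1 ≤ Fintype.card α) (hij : i ≤ j)
    (hjn : j ≤ Fintype.card α) :
    ∃ S : Finset (Finset α × Finset α), (∀ e ∈ S, e.1 ⊂ e.2) ∧
      (∀ x y : Finset α, x ⊆ y → #x = i → #y = j →
        ∃ z, (x = z ∨ (x, z) ∈ S) ∧ (z = y ∨ (z, y) ∈ S)) ∧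
      (#S : ℝ) ≤ 6 * Fintype.card α * sInf (levelCost (Fintype.card α) i j '' Set.Icc i j) := by
  set n := Fintype.card α
  obtain ⟨k, ⟨hik, hkj⟩, hk⟩ := ((Set.nonempty_Icc.2 hij).image (levelCost n i j)).csInf_mem
    ((Set.finite_Icc i j).image _)
  obtain ⟨Z, hZL, hZcard, hZ⟩ := exists_hubs hn hik hkj hjn
  refine ⟨hubEdges i j Z, fun e he => (mem_filter.1 he).2.1, fun x y hxy hx hy => ?_, ?_⟩
  · obtain ⟨z, hz, hxz, hzy⟩ := hZ x y hxy hx hy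
    exact ⟨z, hop_hubEdges hz hxz hzy hx hy⟩
  · rw [← hk]
    calc (#(hubEdges i j Z) : ℝ) ≤ #Z * (k.choose i + (n - k).choose (n - j) : ℕ) := by
          exact_mod_cast card_hubEdges_le hZL hkj hjn
      _ ≤ 3 * n * (n.choose k / (j - i).choose (k - i)) *
          (2 * max (k.choose i : ℝ) ((n - k).choose (n - j))) := by
          push_cast
          gcongr
          linarith [le_max_left (k.choose i : ℝ) ((n - k).choose (n - j)),
            le_max_right (k.choose i : ℝ) ((n - k).choose (n - j))]
      _ = 6 * n * levelCost n i j k := by rw [levelCost]; ring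

end LevelSpanner

def levelPairs (n : ℕ) : Finset (ℕ × ℕ) := {q ∈ range (n + 1) ×ˢ range (n + 1) | q.1 < q.2}

lemma mem_levelPairs {n : ℕ} {q : ℕ × ℕ} : q ∈ levelPairs n ↔ q.1 < q.2 ∧ q.2 ≤ n := by
  simp only [levelPairs, mem_filter, mem_product, mem_range]
  omega

lemma card_levelPairs_le {n : ℕ} (hn : 1 ≤ n) : (#(levelPairs n) : ℝ) ≤ 4 * n ^ 2 := by
  have : #(levelPairs n) ≤ (n + 1) * (n + 1) :=
    (card_filter_le _ _).trans (by rw [card_product, card_range])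
  have hn' : (1 : ℝ) ≤ n := by exact_mod_cast hn
  calc (#(levelPairs n) : ℝ) ≤ (n + 1) * (n + 1) := by exact_mod_cast this
    _ ≤ 4 * n ^ 2 := by nlinarith

theorem exists_twoHop_spanner {α : Type*} [Fintype α] [DecidableEq α]
    (hn : 1 ≤ Fintype.card α) :
    ∃ S : Finset (Finset α × Finset α), (∀ e ∈ S, e.1 ⊂ e.2) ∧
      (∀ x y : Finset α, x ⊂ y → ∃ z, (x = z ∨ (x, z) ∈ S) ∧ (z = y ∨ (z, y) ∈ S)) ∧
      (#S : ℝ) ≤ 24 * Fintype.card α ^ 3 * spannerCost (Fintype.card α) := by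
  set n := Fintype.card α
  have hS : ∀ q : ℕ × ℕ, ∃ S : Finset (Finset α × Finset α), q ∈ levelPairs n →
      (∀ e ∈ S, e.1 ⊂ e.2) ∧
      (∀ x y : Finset α, x ⊆ y → #x = q.1 → #y = q.2 →
        ∃ z, (x = z ∨ (x, z) ∈ S) ∧ (z = y ∨ (z, y) ∈ S)) ∧
      (#S : ℝ) ≤ 6 * n * spannerCost n := fun q => by
    by_cases hq : q ∈ levelPairs n
    · obtain ⟨hij, hjn⟩ := mem_levelPairs.1 hq
      obtain ⟨S, hlt, hhop, hcard⟩ := exists_levelPair_spanner hn hij.le hjn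
      exact ⟨S, fun _ => ⟨hlt, hhop,
        hcard.trans (by gcongr; exact sInf_levelCost_le_spannerCost hij hjn)⟩⟩
    · exact ⟨∅, fun h => absurd h hq⟩
  choose S hS using hS
  refine ⟨(levelPairs n).biUnion S, fun e he => ?_, fun x y hxy => ?_, ?_⟩
  · obtain ⟨q, hq, he⟩ := mem_biUnion.1 he
    exact (hS q hq).1 e he
  · have hq : (#x, #y) ∈ levelPairs n := mem_levelPairs.2 ⟨card_lt_card hxy, card_le_univ y⟩
    obtain ⟨z, hxz, hzy⟩ := (hS _ hq).2.1 x y hxy.subset rfl rfl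
    exact ⟨z, hxz.imp_right (subset_biUnion_of_mem S hq ·),
      hzy.imp_right (subset_biUnion_of_mem S hq ·)⟩
  · calc (#((levelPairs n).biUnion S) : ℝ) ≤ ∑ q ∈ levelPairs n, (#(S q) : ℝ) := by
          exact_mod_cast card_biUnion_le
      _ ≤ #(levelPairs n) * (6 * n * spannerCost n) := by
          rw [← nsmul_eq_mul]; exact sum_le_card_nsmul _ _ _ fun q hq => (hS q hq).2.2
      _ ≤ 4 * n ^ 2 * (6 * n * spannerCost n) := by
          have := spannerCost_nonneg hn
          gcongr
          exact card_levelPairs_le hn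
      _ = 24 * n ^ 3 * spannerCost n := by ring

/-- There is a constant `c > 0` such that for every `d ≥ 1` the hypercube `[2]^d` has a
2-TC-spanner with at most
`c·d³·max_{0 ≤ i < j ≤ d} min_{i ≤ k ≤ j} [C(d,k)/C(j-i,k-i)]·max{C(k,i), C(d-k,d-j)}`
edges. -/
theorem stmt15 :
    ∃ c : ℝ, 0 < c ∧ ∀ d : ℕ, 1 ≤ d →
      ∃ H : (Fin d → Bool) → (Fin d → Bool) → Prop,
        IsTCSpanner (cubeEdge d) H 2 ∧
        (({p : (Fin d → Bool) × (Fin d → Bool) | H p.1 p.2}).ncard : ℝ) ≤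
          c * (d : ℝ) ^ 3 *
            sSup {x : ℝ | ∃ i j : ℕ, i < j ∧ j ≤ d ∧
              x = sInf ((fun k : ℕ =>
                ((d.choose k : ℝ) / ((j - i).choose (k - i) : ℝ)) *
                  max ((k.choose i : ℝ)) (((d - k).choose (d - j) : ℝ))) '' Set.Icc i j)} := by
  refine ⟨24, by norm_num, fun d hd => ?_⟩
  obtain ⟨S, hS, hhop, hcard⟩ := exists_twoHop_spanner (α := Fin d) (by simpa using hd)
  let e := funBoolOrderIsoFinset (Fin d)
  refine ⟨fun x y => (e x, e y) ∈ S, ?_, ?_⟩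
  · classical
    have : LocallyFiniteOrder (Fin d → Bool) := Fintype.toLocallyFiniteOrder
    rw [cubeEdge_eq_covBy]
    refine isTCSpanner_covBy_two (fun x y h => e.lt_iff_lt.1 (hS _ h)) fun x y hxy => ?_
    obtain ⟨z, hxz, hzy⟩ := hhop (e x) (e y) (e.lt_iff_lt.2 hxy)
    refine ⟨e.symm z, ?_, ?_⟩
    · simpa [e.eq_symm_apply] using hxz
    · simpa [e.symm_apply_eq] using hzy
  · have : {p : (Fin d → Bool) × (Fin d → Bool) | (e p.1, e p.2) ∈ S} =
        (e.toEquiv.prodCongr e.toEquiv) ⁻¹' S := rfl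
    rw [this, Set.ncard_preimage_of_injective_subset_range (Equiv.injective _) (by simp),
      Set.ncard_coe_finset]
    rw [Fintype.card_fin] at hcard
    exact hcard
end

section
/- For every integer d ≥ 1, every 2-TC-spanner of the Boolean hypercube [2]^d has at least (1/(4d))·max_{0≤i<j≤d} min_{i≤k≤j} [C(d,i)·C(d−i,d−j)] / min{C(k,i), C(d−k,d−j)} edges, where C(a,b) denotes the binomial coefficient. -/
/-!
Fix levels `i < j` of the cube. Each of the `C(d,i)·C(d-i,d-j)` comparable pairs `u ≼ v` with
`|u| = i`, `|v| = j` is joined in a 2-TC-spanner by one edge or by a path `u → w → v`. Charge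
the pair to `u → w` if `w` has no more vertices of level `j` above it (`C(d-|w|, d-j)` of them)
than vertices of level `i` below it (`C(|w|, i)` of them), and to `w → v` otherwise. An edge
`a → b` is then charged by at most `1 + min(C(|b|,i), C(d-|b|,d-j)) + min(C(|a|,i), C(d-|a|,d-j))`
pairs, which is at most `1 + 2M ≤ 4dM` for `M = max_{i ≤ k ≤ j} min(C(k,i), C(d-k,d-j))`.
-/

open Finset

section TwoHopCharging

variable {α : Type*} [PartialOrder α] [DecidableEq α] [DecidableLE α]

def twoHopCharge (A B : Finset α) (e : α × α) : Finset (α × α) :=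
  insert e
    ((if #{v ∈ B | e.2 ≤ v} ≤ #{u ∈ A | u ≤ e.2} then {v ∈ B | e.2 ≤ v}.image (e.1, ·) else ∅) ∪
      (if #{v ∈ B | e.1 ≤ v} ≤ #{u ∈ A | u ≤ e.1} then ∅ else {u ∈ A | u ≤ e.1}.image (·, e.2)))

lemma card_twoHopCharge_le {A B : Finset α} {M : ℕ}
    (hM : ∀ w, min #{u ∈ A | u ≤ w} #{v ∈ B | w ≤ v} ≤ M) (e : α × α) :
    #(twoHopCharge A B e) ≤ 1 + 2 * M := by
  have hup : #(if #{v ∈ B | e.2 ≤ v} ≤ #{u ∈ A | u ≤ e.2}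
      then {v ∈ B | e.2 ≤ v}.image (e.1, ·) else ∅) ≤ M := by
    split_ifs with h
    · exact card_image_le.trans ((min_eq_right h).symm.le.trans (hM e.2))
    · simp
  have hdown : #(if #{v ∈ B | e.1 ≤ v} ≤ #{u ∈ A | u ≤ e.1}
      then ∅ else {u ∈ A | u ≤ e.1}.image (·, e.2)) ≤ M := by
    split_ifs with h
    · simp
    · exact card_image_le.trans ((min_eq_left (not_le.1 h).le).symm.le.trans (hM e.1))
  calc #(twoHopCharge A B e) ≤ _ + 1 := card_insert_le _ _
    _ ≤ (M + M) + 1 := by grw [card_union_le, hup, hdown]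
    _ = 1 + 2 * M := by ring

lemma filter_le_subset_biUnion_twoHopCharge {A B : Finset α} {E : Finset (α × α)}
    (hE : ∀ e ∈ E, e.1 ≤ e.2)
    (hpath : ∀ u ∈ A, ∀ v ∈ B, u ≤ v → (u, v) ∈ E ∨ ∃ w, (u, w) ∈ E ∧ (w, v) ∈ E) :
    {p ∈ A ×ˢ B | p.1 ≤ p.2} ⊆ E.biUnion (twoHopCharge A B) := by
  rintro ⟨u, v⟩ hp
  simp only [mem_filter, mem_product] at hp
  obtain ⟨⟨hu, hv⟩, huv⟩ := hp
  simp only [mem_biUnion]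
  rcases hpath u hu v hv huv with he | ⟨w, huw, hwv⟩
  · exact ⟨_, he, mem_insert_self _ _⟩
  by_cases hw : #{v ∈ B | w ≤ v} ≤ #{u ∈ A | u ≤ w}
  · refine ⟨(u, w), huw, mem_insert_of_mem (mem_union_left _ ?_)⟩
    rw [if_pos hw]
    exact mem_image_of_mem _ (mem_filter.2 ⟨hv, hE _ hwv⟩)
  · refine ⟨(w, v), hwv, mem_insert_of_mem (mem_union_right _ ?_)⟩
    rw [if_neg hw]
    exact mem_image_of_mem (·, v) (mem_filter.2 ⟨hu, hE _ huw⟩)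

theorem card_comparable_le_card_mul {A B : Finset α} {E : Finset (α × α)} {M : ℕ}
    (hE : ∀ e ∈ E, e.1 ≤ e.2)
    (hpath : ∀ u ∈ A, ∀ v ∈ B, u ≤ v → (u, v) ∈ E ∨ ∃ w, (u, w) ∈ E ∧ (w, v) ∈ E)
    (hM : ∀ w, min #{u ∈ A | u ≤ w} #{v ∈ B | w ≤ v} ≤ M) :
    #{p ∈ A ×ˢ B | p.1 ≤ p.2} ≤ #E * (1 + 2 * M) :=
  calc #{p ∈ A ×ˢ B | p.1 ≤ p.2} ≤ #(E.biUnion (twoHopCharge A B)) :=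
        card_le_card (filter_le_subset_biUnion_twoHopCharge hE hpath)
    _ ≤ ∑ e ∈ E, #(twoHopCharge A B e) := card_biUnion_le
    _ ≤ #E * (1 + 2 * M) := sum_le_card_nsmul _ _ _ fun e _ => card_twoHopCharge_le hM e

end TwoHopCharging

lemma distLE_two_of_ne {V : Type*} {H : V → V → Prop} {u v : V} (h : distLE H 2 u v)
    (hne : u ≠ v) : H u v ∨ ∃ w, H u w ∧ H w v := by
  simp only [distLE] at h
  rcases h with h | ⟨w, huw, rfl | ⟨w', hww', rfl⟩⟩
  · exact absurd h hne
  · exact Or.inl huw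
  · exact Or.inr ⟨w, huw, hww'⟩

namespace Hypercube

variable {d : ℕ}

instance : DecidableLE (Fin d → Bool) := fun x y => inferInstanceAs (Decidable (∀ t, x t ≤ y t))

def support (x : Fin d → Bool) : Finset (Fin d) := {t | x t}

def weight (x : Fin d → Bool) : ℕ := #(support x)

def level (d i : ℕ) : Finset (Fin d → Bool) := {x | weight x = i}

def ofFinset (s : Finset (Fin d)) : Fin d → Bool := fun t => decide (t ∈ s)

lemma support_ofFinset (s : Finset (Fin d)) : support (ofFinset s) = s := by
  ext t; simp [support, ofFinset]

lemma ofFinset_support (x : Fin d → Bool) : ofFinset (support x) = x := by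
  funext t; simp [support, ofFinset]

lemma support_subset_support_iff {x y : Fin d → Bool} : support x ⊆ support y ↔ x ≤ y := by
  simp only [support, subset_iff, mem_filter, mem_univ, true_and, Pi.le_def]
  exact forall_congr' fun t => by cases x t <;> cases y t <;> decide

lemma support_compl (x : Fin d → Bool) : support xᶜ = (support x)ᶜ := by
  ext t; simp [support]

lemma weight_compl (x : Fin d → Bool) : weight xᶜ = d - weight x := by
  rw [weight, support_compl, card_compl, Fintype.card_fin, weight]

lemma weight_le (x : Fin d → Bool) : weight x ≤ d :=
  (card_le_univ _).trans_eq (Fintype.card_fin d)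

lemma cubeEdge_le {x y : Fin d → Bool} (h : cubeEdge d x y) : x ≤ y := by
  obtain ⟨t, -, rfl⟩ := h
  simp

lemma reflTransGen_cubeEdge_iff {x y : Fin d → Bool} :
    Relation.ReflTransGen (cubeEdge d) x y ↔ x ≤ y := by
  refine ⟨fun h => ?_, fun h => ?_⟩
  · induction h with
    | refl => exact le_rfl
    | tail _ hyz ih => exact ih.trans (cubeEdge_le hyz)
  induction y using WellFoundedLT.induction with
  | _ y ih =>
    obtain rfl | hlt := h.eq_or_lt
    · exact .refl
    obtain ⟨t, hxt, hyt⟩ : ∃ t, x t = false ∧ y t = true := by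
      obtain ⟨t, ht⟩ := (Pi.lt_def.1 hlt).2
      exact ⟨t, Bool.lt_iff.1 ht⟩
    set y' := Function.update y t false
    have hy'y : cubeEdge d y' y := ⟨t, by simp [y'], by simp [y', ← hyt]⟩
    have hy'lt : y' < y := update_lt_self_iff.2 (hyt ▸ Bool.false_lt_true)
    have hxy' : x ≤ y' := le_update_iff.2 ⟨hxt.le, fun s _ => h s⟩
    exact (ih y' hy'lt hxy').tail hy'y

lemma card_filter_level_le (x : Fin d → Bool) (i : ℕ) :
    #{y ∈ level d i | y ≤ x} = (weight x).choose i := by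
  rw [weight, ← card_powersetCard]
  refine card_nbij' support ofFinset (fun y hy => ?_) (fun s hs => ?_)
    (fun y _ => ofFinset_support y) (fun s _ => support_ofFinset s)
  · simp only [coe_filter, level, mem_filter, mem_univ, true_and] at hy
    exact mem_powersetCard.2 ⟨support_subset_support_iff.2 hy.2, hy.1⟩
  · simp only [mem_coe, mem_powersetCard] at hs
    simp only [coe_filter, level, mem_filter, mem_univ, true_and, Set.mem_ofPred_eq]
    rw [← support_subset_support_iff, weight, support_ofFinset]
    exact ⟨hs.2, hs.1⟩

lemma card_level (d i : ℕ) : #(level d i) = d.choose i := by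
  have h := card_filter_level_le (⊤ : Fin d → Bool) i
  rwa [filter_true_of_mem fun y _ => le_top, weight, show support (⊤ : Fin d → Bool) = univ by
    ext; simp [support], card_univ, Fintype.card_fin] at h

lemma card_filter_level_ge (x : Fin d → Bool) {j : ℕ} (hj : j ≤ d) :
    #{y ∈ level d j | x ≤ y} = (d - weight x).choose (d - j) := by
  rw [← weight_compl, ← card_filter_level_le]
  refine card_equiv (compl_involutive.toPerm _) fun y => ?_
  simp only [Function.Involutive.coe_toPerm, level, mem_filter, mem_univ, true_and, compl_le_compl_iff_le, weight_compl]
  have := weight_le y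
  exact and_congr_left fun _ => by omega

lemma card_filter_le_level_product {i j : ℕ} (hjd : j ≤ d) :
    #{p ∈ level d i ×ˢ level d j | p.1 ≤ p.2} = d.choose i * (d - i).choose (d - j) := by
  rw [card_filter, sum_product, ← card_level, ← smul_eq_mul, ← sum_const]
  refine sum_congr rfl fun u hu => ?_
  rw [← card_filter, card_filter_level_ge u hjd, (mem_filter.1 hu).2]

lemma min_choose_le_of_forall_Icc {i j k M : ℕ} (hk : k ≤ d)
    (hM : ∀ k ∈ Icc i j, min (k.choose i) ((d - k).choose (d - j)) ≤ M) :
    min (k.choose i) ((d - k).choose (d - j)) ≤ M := by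
  by_cases hik : k < i
  · simp [Nat.choose_eq_zero_of_lt hik]
  by_cases hjk : j < k
  · simp [Nat.choose_eq_zero_of_lt (show d - k < d - j by omega)]
  exact hM k (mem_Icc.2 ⟨not_lt.1 hik, not_lt.1 hjk⟩)

theorem choose_mul_choose_le_ncard_mul {H : (Fin d → Bool) → (Fin d → Bool) → Prop}
    (hH : IsTCSpanner (cubeEdge d) H 2) {i j M : ℕ} (hij : i < j) (hjd : j ≤ d)
    (hM : ∀ k ∈ Icc i j, min (k.choose i) ((d - k).choose (d - j)) ≤ M) :
    d.choose i * (d - i).choose (d - j) ≤ {p : _ × _ | H p.1 p.2}.ncard * (1 + 2 * M) := by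
  classical
  rw [Set.ncard_eq_toFinset_card', Set.toFinset_ofPred, ← card_filter_le_level_product hjd]
  refine card_comparable_le_card_mul (fun e he => ?_) (fun u hu v hv huv => ?_) (fun w => ?_)
  · exact reflTransGen_cubeEdge_iff.1 (hH.1 _ _ (mem_filter.1 he).2).2.to_reflTransGen
  · have hne : u ≠ v := by
      rintro rfl
      simp only [level, mem_filter] at hu hv
      omega
    simpa using distLE_two_of_ne (hH.2 u v (reflTransGen_cubeEdge_iff.2 huv)) hne
  · rw [card_filter_level_le, card_filter_level_ge w hjd]
    exact min_choose_le_of_forall_Icc (weight_le w) hM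

theorem exists_choose_mul_choose_div_le {H : (Fin d → Bool) → (Fin d → Bool) → Prop}
    (hH : IsTCSpanner (cubeEdge d) H 2) {i j : ℕ} (hij : i < j) (hjd : j ≤ d) :
    ∃ k ∈ Set.Icc i j, ((d.choose i : ℝ) * ((d - i).choose (d - j) : ℝ)) /
        min (k.choose i : ℝ) ((d - k).choose (d - j) : ℝ) ≤
      4 * d * {p : _ × _ | H p.1 p.2}.ncard := by
  obtain ⟨k, hk, hkmax⟩ := exists_max_image (Icc i j)
    (fun k => min (k.choose i) ((d - k).choose (d - j))) ⟨i, left_mem_Icc.2 hij.le⟩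
  obtain ⟨hik, hkj⟩ := mem_Icc.1 hk
  set M := min (k.choose i) ((d - k).choose (d - j))
  have hM : 0 < M := lt_min (Nat.choose_pos hik) (Nat.choose_pos (by omega))
  have hcount := choose_mul_choose_le_ncard_mul hH hij hjd hkmax
  refine ⟨k, ⟨hik, hkj⟩, ?_⟩
  rw [← Nat.cast_min, div_le_iff₀ (by exact_mod_cast hM)]
  have h4d : 1 + 2 * M ≤ 4 * d * M := by nlinarith
  exact_mod_cast (hcount.trans (Nat.mul_le_mul_left _ h4d)).trans_eq (by ring)

end Hypercube

theorem stmt16_general (d : ℕ)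
    (H : (Fin d → Bool) → (Fin d → Bool) → Prop)
    (hH : IsTCSpanner (cubeEdge d) H 2) :
    (1 / (4 * (d : ℝ))) *
      sSup {x : ℝ | ∃ i j : ℕ, i < j ∧ j ≤ d ∧
        x = sInf ((fun k : ℕ =>
          ((d.choose i : ℝ) * ((d - i).choose (d - j) : ℝ)) /
            min ((k.choose i : ℝ)) (((d - k).choose (d - j) : ℝ))) '' Set.Icc i j)} ≤
      (({p : (Fin d → Bool) × (Fin d → Bool) | H p.1 p.2}).ncard : ℝ) := by
  have hN : (0 : ℝ) ≤ {p : (Fin d → Bool) × (Fin d → Bool) | H p.1 p.2}.ncard := Nat.cast_nonneg _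
  rw [one_div_mul_eq_div]
  refine div_le_of_le_mul₀ (by positivity) hN ?_
  refine Real.sSup_le ?_ (by positivity)
  rintro _ ⟨i, j, hij, hjd, rfl⟩
  obtain ⟨k, hk, hle⟩ := Hypercube.exists_choose_mul_choose_div_le hH hij hjd
  refine csInf_le_of_le ?_ ⟨k, hk, rfl⟩ (hle.trans_eq (mul_comm _ _))
  refine ⟨0, ?_⟩
  rintro _ ⟨k', -, rfl⟩
  positivity

/-- Every 2-TC-spanner of the hypercube `[2]^d` has at least
`(1/(4d))·max_{0 ≤ i < j ≤ d} min_{i ≤ k ≤ j} [C(d,i)·C(d-i,d-j)] / min{C(k,i), C(d-k,d-j)}`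
edges. -/
theorem stmt16 (d : ℕ) (hd : 1 ≤ d)
    (H : (Fin d → Bool) → (Fin d → Bool) → Prop)
    (hH : IsTCSpanner (cubeEdge d) H 2) :
    (1 / (4 * (d : ℝ))) *
      sSup {x : ℝ | ∃ i j : ℕ, i < j ∧ j ≤ d ∧
        x = sInf ((fun k : ℕ =>
          ((d.choose i : ℝ) * ((d - i).choose (d - j) : ℝ)) /
            min ((k.choose i : ℝ)) (((d - k).choose (d - j) : ℝ))) '' Set.Icc i j)} ≤
      (({p : (Fin d → Bool) × (Fin d → Bool) | H p.1 p.2}).ncard : ℝ) :=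
  stmt16_general d H hH
end
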